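/- Let λ₁, λ₂ ∈ ℂ with λ := λ₁/λ₂ ∉ ℚ (in particular aλ₁ + bλ₂ ≠ 0 for all (a,b) ∈ ℤ₍≥0₎² \ {(0,0)}), and let X = Z₀ + R y∂y be a formal vector field with Z₀ = λ₁x∂x + λ₂y∂y and R ∈ ℂ[[x,y]], R(0,0)=0. Then for every G ∈ ℂ[[x,y]] there exists F ∈ ℂ[[x,y]] with X·F = G if and only if G(0,0) = 0; moreover F − F(0,0) is unique. -/

import Mathlib

/- Statement 7 (Lemma irrat-eq-h-form): λ₁/λ₂ ∉ ℚ (in particular aλ₁ + bλ₂ ≠ 0 for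
(a,b) ∈ ℤ≥0² \ {0}).  Let X = Z₀ + R·y∂y with Z₀ = λ₁x∂x + λ₂y∂y, R ∈ ℂ[[x,y]],
R(0,0) = 0.  For G ∈ ℂ[[x,y]] there is F ∈ ℂ[[x,y]] with X·F = G iff G(0,0) = 0;
moreover F − F(0,0) is unique. -/

noncomputable section
open MvPowerSeries

abbrev R2 := MvPowerSeries (Fin 2) ℂ

def pd (i : Fin 2) (f : R2) : R2 :=
  fun d => ((d i : ℂ) + 1) * MvPowerSeries.coeff (d + Finsupp.single i 1) f

/-- X·F where X = Z₀ + R·y∂y = λ₁x∂x + (λ₂ + R)y∂y. -/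
def XD (lam₁ lam₂ : ℂ) (R : R2) (F : R2) : R2 :=
  MvPowerSeries.C lam₁ * MvPowerSeries.X 0 * pd 0 F +
    (MvPowerSeries.C lam₂ + R) * MvPowerSeries.X 1 * pd 1 F

/-!
Comparing coefficients of `x^a y^b` in `X·F = G` gives
`(aλ₁ + bλ₂) F_{a,b} + (coefficients of R times those of F of smaller multidegree) = G_{a,b}`,
since `R(0,0) = 0`. At `(0,0)` the left side vanishes, which forces `G(0,0) = 0`; elsewhere the
non-resonance `aλ₁ + bλ₂ ≠ 0` lets one solve for `F_{a,b}` by well-founded recursion, and the same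
recursion shows that a solution of `X·H = 0` is constant.
-/

open MvPowerSeries Finset

lemma coeff_pd (i : Fin 2) (F : R2) (d : Fin 2 →₀ ℕ) :
    coeff d (pd i F) = ((d i : ℂ) + 1) * coeff (d + Finsupp.single i 1) F :=
  rfl

lemma coeff_X_mul_pd (i : Fin 2) (F : R2) (d : Fin 2 →₀ ℕ) :
    coeff d (X i * pd i F) = (d i : ℂ) * coeff d F := by
  rw [X, coeff_monomial_mul]
  split_ifs with h
  · obtain ⟨e, rfl⟩ := exists_add_of_le h
    rw [one_mul, add_tsub_cancel_left, coeff_pd, add_comm e]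
    simp [add_comm]
  · have : d i = 0 := by simpa [Finsupp.single_le_iff, Nat.one_le_iff_ne_zero] using h
    simp [this]

/-- The eigenvalue of `Z₀` on the monomial `x ^ d 0 * y ^ d 1`. -/
def weight (lam₁ lam₂ : ℂ) (d : Fin 2 →₀ ℕ) : ℂ := d 0 * lam₁ + d 1 * lam₂

lemma weight_ne_zero {lam₁ lam₂ : ℂ}
    (hres : ∀ a b : ℕ, ¬ (a = 0 ∧ b = 0) → (a : ℂ) * lam₁ + (b : ℂ) * lam₂ ≠ 0)
    {d : Fin 2 →₀ ℕ} (hd : d ≠ 0) : weight lam₁ lam₂ d ≠ 0 := by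
  refine hres _ _ fun ⟨h0, h1⟩ => hd ?_
  ext i
  fin_cases i <;> assumption

lemma constantCoeff_XD (lam₁ lam₂ : ℂ) (R F : R2) : constantCoeff (XD lam₁ lam₂ R F) = 0 := by
  simp [XD]

lemma coeff_XD {R : R2} (hR : constantCoeff R = 0) (lam₁ lam₂ : ℂ) (F : R2)
    (d : Fin 2 →₀ ℕ) :
    coeff d (XD lam₁ lam₂ R F) = weight lam₁ lam₂ d * coeff d F +
      ∑ p ∈ antidiagonal d with p.1 ≠ 0, coeff p.1 R * (p.2 1 : ℂ) * coeff p.2 F := by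
  classical
  rw [XD, mul_assoc, mul_assoc, add_mul, map_add, map_add, coeff_C_mul, coeff_C_mul,
    coeff_X_mul_pd, coeff_X_mul_pd, coeff_mul, sum_filter_of_ne]
  · simp only [coeff_X_mul_pd, weight, mul_assoc]
    ring
  · rintro ⟨e, f⟩ - hp rfl
    simp [hR] at hp

lemma snd_lt_of_mem_antidiagonal {M : Type*} [AddCommMonoid M] [PartialOrder M]
    [CanonicallyOrderedAdd M] [IsOrderedCancelAddMonoid M] [HasAntidiagonal M] {d : M} {p : M × M}
    (hp : p ∈ antidiagonal d) (h : p.1 ≠ 0) : p.2 < d := by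
  rw [← mem_antidiagonal.mp hp]
  exact lt_add_of_pos_left _ (pos_iff_ne_zero.mpr h)

/-- `coeff_XD`, solved for `coeff d F`. -/
def solutionCoeff (lam₁ lam₂ : ℂ) (R G : R2) (d : Fin 2 →₀ ℕ) : ℂ :=
  (coeff d G - ∑ p ∈ {p ∈ antidiagonal d | p.1 ≠ 0}.attach,
      coeff p.1.1 R * (p.1.2 1 : ℂ) * solutionCoeff lam₁ lam₂ R G p.1.2) /
    weight lam₁ lam₂ d
termination_by d
decreasing_by
  have hp := p.2
  rw [mem_filter] at hp
  exact snd_lt_of_mem_antidiagonal hp.1 hp.2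

def solution (lam₁ lam₂ : ℂ) (R G : R2) : R2 := solutionCoeff lam₁ lam₂ R G

lemma coeff_solution (lam₁ lam₂ : ℂ) (R G : R2) (d : Fin 2 →₀ ℕ) :
    coeff d (solution lam₁ lam₂ R G) =
      (coeff d G - ∑ p ∈ antidiagonal d with p.1 ≠ 0,
        coeff p.1 R * (p.2 1 : ℂ) * coeff p.2 (solution lam₁ lam₂ R G)) /
      weight lam₁ lam₂ d := by
  show solutionCoeff lam₁ lam₂ R G d = _
  rw [solutionCoeff, sum_attach _ fun p : (Fin 2 →₀ ℕ) × (Fin 2 →₀ ℕ) =>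
    coeff p.1 R * (p.2 1 : ℂ) * solutionCoeff lam₁ lam₂ R G p.2]
  rfl

lemma XD_solution {lam₁ lam₂ : ℂ}
    (hres : ∀ a b : ℕ, ¬ (a = 0 ∧ b = 0) → (a : ℂ) * lam₁ + (b : ℂ) * lam₂ ≠ 0)
    {R : R2} (hR : constantCoeff R = 0) {G : R2} (hG : constantCoeff G = 0) :
    XD lam₁ lam₂ R (solution lam₁ lam₂ R G) = G := by
  ext d
  rw [coeff_XD hR]
  rcases eq_or_ne d 0 with rfl | hd
  · simp [weight, hG, filter_singleton]
  · rw [coeff_solution, mul_div_cancel₀ _ (weight_ne_zero hres hd), sub_add_cancel]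

lemma XD_sub (lam₁ lam₂ : ℂ) (R F F' : R2) :
    XD lam₁ lam₂ R (F - F') = XD lam₁ lam₂ R F - XD lam₁ lam₂ R F' := by
  have pd_sub (i : Fin 2) : pd i (F - F') = pd i F - pd i F' := by
    ext d
    simp only [coeff_pd, map_sub, mul_sub]
  simp only [XD, pd_sub, mul_sub]
  ring

lemma eq_C_constantCoeff_of_XD_eq_zero {lam₁ lam₂ : ℂ}
    (hres : ∀ a b : ℕ, ¬ (a = 0 ∧ b = 0) → (a : ℂ) * lam₁ + (b : ℂ) * lam₂ ≠ 0)
    {R : R2} (hR : constantCoeff R = 0) {H : R2} (hH : XD lam₁ lam₂ R H = 0) :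
    H = C (constantCoeff H) := by
  have coeff_eq_zero (d : Fin 2 →₀ ℕ) : d ≠ 0 → coeff d H = 0 := by
    induction d using WellFoundedLT.induction with
    | _ d ih =>
      intro hd
      have hsum : ∑ p ∈ antidiagonal d with p.1 ≠ 0, coeff p.1 R * (p.2 1 : ℂ) * coeff p.2 H
          = 0 := by
        refine sum_eq_zero fun p hp => ?_
        rw [mem_filter] at hp
        rcases eq_or_ne p.2 0 with h2 | h2
        · simp [h2]
        · rw [ih _ (snd_lt_of_mem_antidiagonal hp.1 hp.2) h2, mul_zero]
      have := congrArg (coeff d) hH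
      rw [coeff_XD hR, hsum, add_zero, map_zero] at this
      exact (mul_eq_zero.mp this).resolve_left (weight_ne_zero hres hd)
  ext d
  rw [coeff_C]
  split_ifs with hd
  · rw [hd, coeff_zero_eq_constantCoeff_apply]
  · exact coeff_eq_zero d hd

theorem stmt7_general (lam₁ lam₂ : ℂ)
    (hres : ∀ a b : ℕ, ¬ (a = 0 ∧ b = 0) → (a : ℂ) * lam₁ + (b : ℂ) * lam₂ ≠ 0)
    (R : R2) (hR : MvPowerSeries.constantCoeff R = 0)
    (G : R2) :
    ((∃ F : R2, XD lam₁ lam₂ R F = G) ↔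
      MvPowerSeries.constantCoeff G = 0) ∧
    (∀ F F' : R2, XD lam₁ lam₂ R F = G → XD lam₁ lam₂ R F' = G →
      F - MvPowerSeries.C (MvPowerSeries.constantCoeff F)
        = F' - MvPowerSeries.C (MvPowerSeries.constantCoeff F')) := by
  refine ⟨⟨?_, fun hG => ⟨_, XD_solution hres hR hG⟩⟩, fun F F' hF hF' => ?_⟩
  · rintro ⟨F, rfl⟩
    exact constantCoeff_XD lam₁ lam₂ R F
  · have hdiff := eq_C_constantCoeff_of_XD_eq_zero hres hR
      (by rw [XD_sub, hF, hF', sub_self] : XD lam₁ lam₂ R (F - F') = 0)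
    rw [map_sub, map_sub] at hdiff
    linear_combination hdiff

theorem stmt7 (lam₁ lam₂ : ℂ) (hlam₂ : lam₂ ≠ 0)
    (hirr : ∀ q : ℚ, lam₁ / lam₂ ≠ (q : ℂ))
    (hres : ∀ a b : ℕ, ¬ (a = 0 ∧ b = 0) → (a : ℂ) * lam₁ + (b : ℂ) * lam₂ ≠ 0)
    (R : R2) (hR : MvPowerSeries.constantCoeff R = 0)
    (G : R2) :
    ((∃ F : R2, XD lam₁ lam₂ R F = G) ↔
      MvPowerSeries.constantCoeff G = 0) ∧
    (∀ F F' : R2, XD lam₁ lam₂ R F = G → XD lam₁ lam₂ R F' = G →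
      F - MvPowerSeries.C (MvPowerSeries.constantCoeff F)
        = F' - MvPowerSeries.C (MvPowerSeries.constantCoeff F')) :=
  stmt7_general lam₁ lam₂ hres R hR G
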